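/- Let a1 > 0, a2 > 0 and let θ_1, …, θ_k be distributed according to the multiplicative inverse gamma prior with parameters (a1, a2). Then for every m with 0 < m < a1 and 0 < m < a2, and every h ∈ {1, …, k}, the m-th moment is E(θ_h^m) = (Γ(a1 − m)/Γ(a1)) · (Γ(a2 − m)/Γ(a2))^{h−1}. -/

import Mathlib

/-!
Under `y = 1 / x` the `m`-th moment of `Inv-Ga(a, b)` becomes a gamma integral of shape `a - m`,
so it equals `b ^ m Γ(a - m) / Γ(a)` whenever `m < a`. The `ϑ_l` are almost surely positive, so
`θ_h ^ m = ∏ ϑ_l ^ m`, and independence factors its expectation into the product of these moments.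
-/

open MeasureTheory ProbabilityTheory Real Filter Set

noncomputable def invGammaPDF (a b : ℝ) (x : ℝ) : ℝ :=
  if 0 < x then b ^ a / Real.Gamma a * x ^ (-(a + 1)) * Real.exp (-b / x) else 0

noncomputable def invGammaMeasure (a b : ℝ) : Measure ℝ :=
  MeasureTheory.volume.withDensity (fun x => ENNReal.ofReal (invGammaPDF a b x))

section InverseGamma

variable {a b m : ℝ}

lemma invGammaPDF_of_nonpos {x : ℝ} (hx : x ≤ 0) : invGammaPDF a b x = 0 :=
  if_neg hx.not_gt

lemma invGammaPDF_nonneg (ha : 0 < a) (hb : 0 ≤ b) (x : ℝ) : 0 ≤ invGammaPDF a b x := by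
  have := Gamma_pos_of_pos ha
  unfold invGammaPDF
  split_ifs <;> positivity

lemma measurable_invGammaPDF (a b : ℝ) : Measurable (invGammaPDF a b) :=
  Measurable.ite measurableSet_Ioi (by fun_prop) measurable_const

lemma ae_pos_invGammaMeasure (a b : ℝ) : ∀ᵐ x ∂invGammaMeasure a b, 0 < x := by
  rw [invGammaMeasure, ae_withDensity_iff (measurable_invGammaPDF a b).ennreal_ofReal]
  refine ae_of_all _ fun x hpdf => ?_
  by_contra hx
  exact hpdf (by rw [invGammaPDF_of_nonpos (not_lt.mp hx), ENNReal.ofReal_zero])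

-- The shape of `integral_comp_rpow_Ioi` with exponent `-1`, i.e. the substitution `y = 1 / x`.
lemma invGammaPDF_mul_rpow_of_pos {x : ℝ} (hx : 0 < x) :
    invGammaPDF a b x * x ^ m =
      (|(-1 : ℝ)| * x ^ ((-1 : ℝ) - 1)) •
        (b ^ a / Gamma a * ((x ^ (-1 : ℝ)) ^ (a - m - 1) * exp (-(b * x ^ (-1 : ℝ))))) := by
  have hpow : x ^ ((-1 : ℝ) - 1) * (x ^ (-1 : ℝ)) ^ (a - m - 1) = x ^ (-(a + 1)) * x ^ m := by
    rw [← rpow_mul hx.le, ← rpow_add hx, ← rpow_add hx]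
    ring_nf
  rw [rpow_neg_one] at hpow ⊢
  rw [invGammaPDF, if_pos hx, smul_eq_mul, abs_neg, abs_one, one_mul, ← div_eq_mul_inv, neg_div]
  linear_combination (-(b ^ a / Gamma a * exp (-(b / x)))) * hpow

lemma setIntegral_Ioi_invGammaPDF_mul_rpow (hb : 0 < b) (hma : m < a) :
    ∫ x in Ioi 0, invGammaPDF a b x * x ^ m = b ^ m * Gamma (a - m) / Gamma a := by
  have hgamma :
      ∫ y in Ioi 0, y ^ (a - m - 1) * exp (-(b * y)) = (1 / b) ^ (a - m) * Gamma (a - m) :=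
    integral_rpow_mul_exp_neg_mul_Ioi (sub_pos.mpr hma) hb
  have hscale : b ^ a * (1 / b) ^ (a - m) = b ^ m := by
    rw [one_div, inv_rpow hb.le, ← rpow_neg hb.le, ← rpow_add hb]
    ring_nf
  calc ∫ x in Ioi 0, invGammaPDF a b x * x ^ m
      = ∫ y in Ioi 0, b ^ a / Gamma a * (y ^ (a - m - 1) * exp (-(b * y))) := by
        rw [setIntegral_congr_fun measurableSet_Ioi fun x hx => invGammaPDF_mul_rpow_of_pos hx,
          integral_comp_rpow_Ioi (fun y => b ^ a / Gamma a * (y ^ (a - m - 1) * exp (-(b * y))))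
            (by norm_num)]
    _ = b ^ m * Gamma (a - m) / Gamma a := by
        rw [integral_const_mul, hgamma, ← hscale]
        ring

lemma integral_rpow_invGammaMeasure (ha : 0 < a) (hb : 0 < b) (hma : m < a) :
    ∫ x, x ^ m ∂invGammaMeasure a b = b ^ m * Gamma (a - m) / Gamma a := by
  rw [invGammaMeasure, integral_withDensity_eq_integral_toReal_smul
    (measurable_invGammaPDF a b).ennreal_ofReal (ae_of_all _ fun _ => ENNReal.ofReal_lt_top)]
  simp_rw [ENNReal.toReal_ofReal (invGammaPDF_nonneg ha hb.le _), smul_eq_mul]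
  rw [← setIntegral_Ioi_invGammaPDF_mul_rpow hb hma,
    setIntegral_eq_integral_of_forall_compl_eq_zero fun x hx => ?_]
  rw [invGammaPDF_of_nonpos (not_lt.mp hx), zero_mul]

end InverseGamma

section RandomVariable

variable {Ω : Type*} [MeasurableSpace Ω] {μ : Measure Ω} {X : Ω → ℝ} {a b m : ℝ}

lemma ae_pos_of_map_eq_invGammaMeasure (hX : AEMeasurable X μ)
    (hlaw : μ.map X = invGammaMeasure a b) : ∀ᵐ ω ∂μ, 0 < X ω :=
  ae_of_ae_map hX (hlaw ▸ ae_pos_invGammaMeasure a b)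

lemma integral_rpow_of_map_eq_invGammaMeasure (hX : AEMeasurable X μ)
    (hlaw : μ.map X = invGammaMeasure a b) (ha : 0 < a) (hb : 0 < b) (hma : m < a) :
    ∫ ω, X ω ^ m ∂μ = b ^ m * Gamma (a - m) / Gamma a := by
  rw [← integral_rpow_invGammaMeasure ha hb hma, ← hlaw, integral_map hX (by fun_prop)]

end RandomVariable

theorem multiplicative_inverse_gamma_moment_general
    {Ω : Type*} [MeasureSpace Ω]
    (a1 a2 : ℝ) (ha1 : 0 < a1) (ha2 : 0 < a2)
    (k : ℕ) (ϑ : ℕ → Ω → ℝ)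
    (hmeas : ∀ l, Measurable (ϑ l))
    (hindep : iIndepFun ϑ ℙ)
    (hlaw1 : Measure.map (ϑ 0) ℙ = invGammaMeasure a1 1)
    (hlaw2 : ∀ l, 1 ≤ l → Measure.map (ϑ l) ℙ = invGammaMeasure a2 1)
    (m : ℝ) (hma1 : m < a1) (hma2 : m < a2) :
    ∀ h, 1 ≤ h → h ≤ k →
      ∫ ω, (∏ l ∈ Finset.range h, ϑ l ω) ^ m ∂ℙ =
        Real.Gamma (a1 - m) / Real.Gamma a1 *
          (Real.Gamma (a2 - m) / Real.Gamma a2) ^ (h - 1) := by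
  intro h hh _
  obtain ⟨n, rfl⟩ := Nat.exists_eq_add_of_le' hh
  have hpos : ∀ᵐ ω ∂ℙ, ∀ l, 0 < ϑ l ω := ae_all_iff.mpr fun l => by
    rcases l.eq_zero_or_pos with rfl | hl
    · exact ae_pos_of_map_eq_invGammaMeasure (hmeas 0).aemeasurable hlaw1
    · exact ae_pos_of_map_eq_invGammaMeasure (hmeas l).aemeasurable (hlaw2 l hl)
  have hmoment0 : ∫ ω, ϑ 0 ω ^ m ∂ℙ = Gamma (a1 - m) / Gamma a1 := by
    simpa using
      integral_rpow_of_map_eq_invGammaMeasure (hmeas 0).aemeasurable hlaw1 ha1 one_pos hma1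
  have hmoment : ∀ l, 1 ≤ l → ∫ ω, ϑ l ω ^ m ∂ℙ = Gamma (a2 - m) / Gamma a2 := fun l hl => by
    simpa using integral_rpow_of_map_eq_invGammaMeasure (hmeas l).aemeasurable (hlaw2 l hl) ha2
      one_pos hma2
  calc ∫ ω, (∏ l ∈ Finset.range (n + 1), ϑ l ω) ^ m ∂ℙ
      = ∫ ω, ∏ i : Fin (n + 1), ϑ i ω ^ m ∂ℙ := integral_congr_ae <| hpos.mono fun ω hω => by
        dsimp only
        rw [← Finset.prod_range fun l => ϑ l ω ^ m, Real.finsetProd_rpow _ _ fun l _ => (hω l).le]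
    _ = ∏ i : Fin (n + 1), ∫ ω, ϑ i ω ^ m ∂ℙ :=
        (hindep.precomp Fin.val_injective).integral_fun_prod_comp (f := fun _ x => x ^ m)
          (fun i => (hmeas i).aemeasurable) fun _ => by fun_prop
    _ = Gamma (a1 - m) / Gamma a1 * (Gamma (a2 - m) / Gamma a2) ^ (n + 1 - 1) := by
        rw [Fin.prod_univ_succ, Fin.val_zero, hmoment0, Nat.add_sub_cancel]
        simp [hmoment, div_pow]

/-- `m`-th moments of the multiplicative inverse gamma prior:
`E(θ_h^m) = (Γ(a1-m)/Γ(a1)) · (Γ(a2-m)/Γ(a2))^{h-1}` for `0 < m < min(a1, a2)`. -/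
theorem multiplicative_inverse_gamma_moment
    {Ω : Type*} [MeasureSpace Ω] [IsProbabilityMeasure (ℙ : Measure Ω)]
    (a1 a2 : ℝ) (ha1 : 0 < a1) (ha2 : 0 < a2)
    (k : ℕ) (ϑ : ℕ → Ω → ℝ)
    (hmeas : ∀ l, Measurable (ϑ l))
    (hindep : iIndepFun ϑ ℙ)
    (hlaw1 : Measure.map (ϑ 0) ℙ = invGammaMeasure a1 1)
    (hlaw2 : ∀ l, 1 ≤ l → Measure.map (ϑ l) ℙ = invGammaMeasure a2 1)
    (m : ℝ) (hm0 : 0 < m) (hma1 : m < a1) (hma2 : m < a2) :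
    ∀ h, 1 ≤ h → h ≤ k →
      ∫ ω, (∏ l ∈ Finset.range h, ϑ l ω) ^ m ∂ℙ =
        Real.Gamma (a1 - m) / Real.Gamma a1 *
          (Real.Gamma (a2 - m) / Real.Gamma a2) ^ (h - 1) :=
  multiplicative_inverse_gamma_moment_general a1 a2 ha1 ha2 k ϑ hmeas hindep hlaw1 hlaw2 m hma1 hma2
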